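/- arXiv:1711.04020 — 2 statements merged into one kernel-verified Lean document; each statement's English description precedes it below -/
import Mathlib

section
/- Let F be a homeomorphism of ℝ² commuting with the unit translations S,T, and suppose its rotation set ρ_{S,T}(F) is contained in a compact set 𝒪 ⊂ ℝ². Then there exists k₀ ∈ ℕ such that for every integer k with |k| ≥ k₀, the displacement set D(F^k) = {F^k(z) - z : z ∈ ℝ²} is contained in k·𝒪', where 𝒪' is any compact neighbourhood of 𝒪 (more precisely: for any compact neighbourhood 𝒪' of ρ_{S,T}(F), D(F^k) ⊆ k·𝒪' for all |k| sufficiently large). -/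
open Filter Topology Pointwise

noncomputable section

/-- Natural iterates of a homeomorphism. -/
def hnpow {X : Type*} [TopologicalSpace X] (F : X ≃ₜ X) : ℕ → X ≃ₜ X
  | 0 => Homeomorph.refl X
  | n + 1 => (hnpow F n).trans F

/-- Integer iterates of a homeomorphism. -/
def hzpow {X : Type*} [TopologicalSpace X] (F : X ≃ₜ X) : ℤ → X ≃ₜ X
  | Int.ofNat n => hnpow F n
  | Int.negSucc n => hnpow F.symm (n + 1)

/-- `act U V G m n p = U^{-m} ∘ V^{-n} ∘ G^{p}`. -/
def act {X : Type*} [TopologicalSpace X] (U V G : X ≃ₜ X) (m n p : ℤ) : X ≃ₜ X :=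
  ((hzpow G p).trans (hzpow V (-n))).trans (hzpow U (-m))

/-- A sequence in `ℤ³` tends to infinity. -/
def tendsInfty (s : ℕ → ℤ × ℤ × ℤ) : Prop :=
  Tendsto (fun k => |(s k).1| + |(s k).2.1| + |(s k).2.2|) atTop atTop

/-- The rotation set of `G` with respect to `U` and `V`, defined via compact sets:
`w` belongs to it iff there are a compact `K` and `(m_k, n_k, p_k) ∈ ℤ³` tending to infinity
with `U^{-m_k} V^{-n_k} G^{p_k}(K) ∩ K ≠ ∅` and `(m_k/p_k, n_k/p_k) → w`. -/
def rotSet {X : Type*} [TopologicalSpace X] (G U V : X ≃ₜ X) : Set (ℝ × ℝ) :=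
  {w | ∃ K : Set X, IsCompact K ∧ ∃ s : ℕ → ℤ × ℤ × ℤ,
    (∀ k, ((act U V G (s k).1 (s k).2.1 (s k).2.2) '' K ∩ K).Nonempty) ∧
    tendsInfty s ∧
    Tendsto (fun k => ((((s k).1 : ℝ) / ((s k).2.2 : ℝ), ((s k).2.1 : ℝ) / ((s k).2.2 : ℝ)) : ℝ × ℝ))
      atTop (nhds w)}

/-- Two homeomorphisms commute. -/
def commuting {X : Type*} [TopologicalSpace X] (F G : X ≃ₜ X) : Prop := ∀ x, F (G x) = G (F x)

/-- The unit horizontal translation `S : (x,y) ↦ (x+1,y)`. -/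
def S2 : (ℝ × ℝ) ≃ₜ (ℝ × ℝ) := Homeomorph.addRight ((1 : ℝ), (0 : ℝ))

/-- The unit vertical translation `T : (x,y) ↦ (x,y+1)`. -/
def T2 : (ℝ × ℝ) ≃ₜ (ℝ × ℝ) := Homeomorph.addRight ((0 : ℝ), (1 : ℝ))

/-- The displacement set `D(H) = {H(z) - z : z ∈ ℝ²}`. -/
def disp (H : (ℝ × ℝ) ≃ₜ (ℝ × ℝ)) : Set (ℝ × ℝ) := Set.range fun z => H z - z

/-- `mk2 F a b c = S^a ∘ T^b ∘ F^{-c}`. -/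
def mk2 (F : (ℝ × ℝ) ≃ₜ (ℝ × ℝ)) (a b c : ℤ) : (ℝ × ℝ) ≃ₜ (ℝ × ℝ) :=
  ((hzpow F (-c)).trans (hzpow T2 b)).trans (hzpow S2 a)

/-- The projective action of an integer 3×3 matrix in the affine chart. -/
def lhatZ (L : Matrix (Fin 3) (Fin 3) ℤ) (p : ℝ × ℝ) : ℝ × ℝ :=
  (((L 0 0 : ℝ) * p.1 + (L 0 1 : ℝ) * p.2 + (L 0 2 : ℝ)) /
      ((L 2 0 : ℝ) * p.1 + (L 2 1 : ℝ) * p.2 + (L 2 2 : ℝ)),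
   ((L 1 0 : ℝ) * p.1 + (L 1 1 : ℝ) * p.2 + (L 1 2 : ℝ)) /
      ((L 2 0 : ℝ) * p.1 + (L 2 1 : ℝ) * p.2 + (L 2 2 : ℝ)))

/-!
Since `F` commutes with the integer translations, `z ↦ F z - z` is `ℤ²`-periodic and hence
bounded by some `M`, so `‖F^k z - z‖ ≤ |k| M` and the normalized displacements
`(F^k z - z) / k` stay in a fixed ball. If the claim failed, normalized displacements lying
outside `O'`, with `|k| → ∞`, would accumulate at some `w ∉ interior O'`. Moving each base point
into the unit square `K` by an integer translation and subtracting the integer part `(m, n)` of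
its image gives `S^{-m} T^{-n} F^k (K) ∩ K ≠ ∅` with `(m, n)` within distance `1` of the
displacement, so `w ∈ ρ_{S,T}(F)`, a contradiction.
-/

open Set

theorem hnpow_eq_pow {X : Type*} [TopologicalSpace X] (F : X ≃ₜ X) (n : ℕ) :
    hnpow F n = F ^ n := by
  induction n with
  | zero => rfl
  | succ n ih => rw [hnpow, ih, pow_succ']; rfl

theorem hzpow_eq_zpow {X : Type*} [TopologicalSpace X] (F : X ≃ₜ X) (k : ℤ) :
    hzpow F k = F ^ k := by
  cases k with
  | ofNat n => rw [hzpow, hnpow_eq_pow, Int.ofNat_eq_natCast, zpow_natCast]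
  | negSucc n => rw [hzpow, hnpow_eq_pow, zpow_negSucc, ← inv_pow]; rfl

theorem commuting.commute {X : Type*} [TopologicalSpace X] {F G : X ≃ₜ X} (h : commuting F G) :
    Commute F G :=
  Homeomorph.ext h

theorem Homeomorph.addRight_zpow {G : Type*} [TopologicalSpace G] [AddGroup G]
    [SeparatelyContinuousAdd G] (v : G) (k : ℤ) :
    Homeomorph.addRight v ^ k = Homeomorph.addRight (k • v) := by
  induction k using Int.induction_on with
  | zero => ext x; simp
  | succ n ih =>
    rw [zpow_add_one, ih, add_comm (n : ℤ) 1, add_zsmul, one_zsmul]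
    ext x
    simp [add_assoc]
  | pred n ih =>
    rw [zpow_sub_one, ih, show -(n : ℤ) - 1 = -1 + -n by ring, add_zsmul, neg_one_zsmul]
    ext x
    simp [Homeomorph.addRight_symm, add_assoc]

def intVec (q : ℤ × ℤ) : ℝ × ℝ := ((q.1 : ℝ), (q.2 : ℝ))

def floorVec (z : ℝ × ℝ) : ℤ × ℤ := (⌊z.1⌋, ⌊z.2⌋)

theorem sub_intVec_floorVec_mem_Icc (z : ℝ × ℝ) : z - intVec (floorVec z) ∈ Icc 0 1 := by
  simp only [mem_Icc, Prod.le_def, intVec, floorVec, Prod.fst_sub, Prod.snd_sub, Prod.fst_zero,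
    Prod.snd_zero, Prod.fst_one, Prod.snd_one, Int.self_sub_floor]
  exact ⟨⟨Int.fract_nonneg _, Int.fract_nonneg _⟩, (Int.fract_lt_one _).le, (Int.fract_lt_one _).le⟩

theorem norm_sub_le_one_of_mem_Icc {a b : ℝ × ℝ} (ha : a ∈ Icc 0 1) (hb : b ∈ Icc 0 1) :
    ‖a - b‖ ≤ 1 := by
  obtain ⟨⟨ha₁, ha₂⟩, ha₁', ha₂'⟩ := ha
  obtain ⟨⟨hb₁, hb₂⟩, hb₁', hb₂'⟩ := hb
  rw [Prod.norm_def, sup_le_iff, Real.norm_eq_abs, Real.norm_eq_abs]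
  exact ⟨abs_sub_le_of_nonneg_of_le ha₁ ha₁' hb₁ hb₁', abs_sub_le_of_nonneg_of_le ha₂ ha₂' hb₂ hb₂'⟩

theorem S2_zpow_mul_T2_zpow_apply (q : ℤ × ℤ) (x : ℝ × ℝ) :
    (S2 ^ q.1 * T2 ^ q.2) x = x + intVec q := by
  simp only [S2, T2, Homeomorph.addRight_zpow, Homeomorph.mul_apply, Homeomorph.coe_addRight]
  ext <;> simp [intVec, add_comm]

theorem act_S2_T2_apply (F : (ℝ × ℝ) ≃ₜ (ℝ × ℝ)) (m n p : ℤ) (x : ℝ × ℝ) :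
    act S2 T2 F m n p x = (F ^ p) x - intVec (m, n) := by
  simp only [act, hzpow_eq_zpow, S2, T2, Homeomorph.addRight_zpow, Homeomorph.trans_apply,
    Homeomorph.coe_addRight]
  ext <;> simp [intVec, sub_eq_add_neg]

def CommutesWithIntTranslations (G : (ℝ × ℝ) ≃ₜ (ℝ × ℝ)) : Prop :=
  ∀ q x, G (x + intVec q) = G x + intVec q

theorem commutesWithIntTranslations_zpow {F : (ℝ × ℝ) ≃ₜ (ℝ × ℝ)} (hS : commuting F S2)
    (hT : commuting F T2) (p : ℤ) : CommutesWithIntTranslations (F ^ p) := by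
  intro q x
  have hcomm : Commute (F ^ p) (S2 ^ q.1 * T2 ^ q.2) :=
    (hS.commute.zpow_zpow p q.1).mul_right (hT.commute.zpow_zpow p q.2)
  rw [← S2_zpow_mul_T2_zpow_apply, ← S2_zpow_mul_T2_zpow_apply, ← Homeomorph.mul_apply,
    hcomm.eq, Homeomorph.mul_apply]

namespace CommutesWithIntTranslations

variable {G : (ℝ × ℝ) ≃ₜ (ℝ × ℝ)} (hG : CommutesWithIntTranslations G)
include hG

theorem apply_sub_sub (q : ℤ × ℤ) (x : ℝ × ℝ) :
    G (x - intVec q) - (x - intVec q) = G x - x := by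
  conv_rhs => rw [← sub_add_cancel x (intVec q), hG]
  abel

theorem exists_norm_apply_sub_le : ∃ M, ∀ z, ‖G z - z‖ ≤ M := by
  obtain ⟨M, hM⟩ := isCompact_Icc.exists_bound_of_continuousOn
    (G.continuous.sub continuous_id).continuousOn (s := Icc (0 : ℝ × ℝ) 1)
  refine ⟨M, fun z => ?_⟩
  rw [← hG.apply_sub_sub (floorVec z)]
  exact hM _ (sub_intVec_floorVec_mem_Icc z)

end CommutesWithIntTranslations

theorem norm_pow_apply_sub_le {X : Type*} [SeminormedAddCommGroup X] (G : X ≃ₜ X) {M : ℝ}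
    (h : ∀ z, ‖G z - z‖ ≤ M) (n : ℕ) (z : X) : ‖(G ^ n) z - z‖ ≤ n * M := by
  induction n with
  | zero => simp
  | succ n ih =>
    calc ‖(G ^ (n + 1)) z - z‖ = ‖(G ((G ^ n) z) - (G ^ n) z) + ((G ^ n) z - z)‖ := by
          rw [pow_succ', Homeomorph.mul_apply, sub_add_sub_cancel]
      _ ≤ M + n * M := (norm_add_le _ _).trans (add_le_add (h _) ih)
      _ = (n + 1 : ℕ) * M := by push_cast; ring

theorem norm_zpow_apply_sub_le {X : Type*} [SeminormedAddCommGroup X] (G : X ≃ₜ X) {M : ℝ}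
    (h : ∀ z, ‖G z - z‖ ≤ M) (k : ℤ) (z : X) : ‖(G ^ k) z - z‖ ≤ |k| * M := by
  obtain ⟨n, rfl | rfl⟩ := Int.eq_nat_or_neg k
  · simpa using norm_pow_apply_sub_le G h n z
  · -- `G⁻ⁿ z - z` is minus the displacement of `Gⁿ` at `G⁻ⁿ z`.
    have := norm_pow_apply_sub_le G h n ((G ^ (-n : ℤ)) z)
    rw [← zpow_natCast, ← Homeomorph.mul_apply, ← zpow_add, add_neg_cancel, zpow_zero,
      Homeomorph.one_apply, norm_sub_rev] at this
    simpa using this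

theorem norm_inv_smul_zpow_apply_sub_le {X : Type*} [SeminormedAddCommGroup X] [NormedSpace ℝ X]
    (G : X ≃ₜ X) {M : ℝ} (h : ∀ z, ‖G z - z‖ ≤ M) (k : ℤ) (z : X) :
    ‖(k : ℝ)⁻¹ • ((G ^ k) z - z)‖ ≤ M := by
  rcases eq_or_ne k 0 with rfl | hk
  · simpa using (norm_nonneg _).trans (h z)
  have hk' : (0 : ℝ) < |(k : ℝ)| := by positivity
  calc ‖(k : ℝ)⁻¹ • ((G ^ k) z - z)‖ ≤ |(k : ℝ)|⁻¹ * (|k| * M) := by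
        rw [norm_smul, norm_inv, Real.norm_eq_abs]
        gcongr
        exact norm_zpow_apply_sub_le G h k z
    _ = M := by rw [Int.cast_abs, inv_mul_cancel_left₀ hk'.ne']

theorem mem_rotSet_of_tendsto {F : (ℝ × ℝ) ≃ₜ (ℝ × ℝ)} (hS : commuting F S2) (hT : commuting F T2)
    {k : ℕ → ℤ} (hk : Tendsto (fun j => |k j|) atTop atTop) {z : ℕ → ℝ × ℝ} {w : ℝ × ℝ}
    (hw : Tendsto (fun j => (k j : ℝ)⁻¹ • ((F ^ k j) (z j) - z j)) atTop (𝓝 w)) :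
    w ∈ rotSet F S2 T2 := by
  -- base points `y j` in the unit square and integer parts `q j` of their images
  set y := fun j => z j - intVec (floorVec (z j))
  set q := fun j => floorVec ((F ^ k j) (y j))
  have hy : ∀ j, y j ∈ Icc 0 1 := fun j => sub_intVec_floorVec_mem_Icc _
  have hFy : ∀ j, (F ^ k j) (y j) - intVec (q j) ∈ Icc 0 1 := fun j => sub_intVec_floorVec_mem_Icc _
  refine ⟨Icc 0 1, isCompact_Icc, fun j => ((q j).1, (q j).2, k j),
    fun j => ⟨_, mem_image_of_mem _ (hy j), ?_⟩, ?_, ?_⟩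
  · rw [act_S2_T2_apply]
    exact hFy j
  · refine tendsto_atTop_mono (fun j => ?_) hk
    linarith [abs_nonneg (q j).1, abs_nonneg (q j).2]
  have hdecomp : ∀ j, (((q j).1 : ℝ) / k j, ((q j).2 : ℝ) / k j) =
      (k j : ℝ)⁻¹ • ((F ^ k j) (z j) - z j) +
        (k j : ℝ)⁻¹ • (y j - ((F ^ k j) (y j) - intVec (q j))) := by
    intro j
    have hd : (F ^ k j) (z j) - z j = (F ^ k j) (y j) - y j :=
      ((commutesWithIntTranslations_zpow hS hT (k j)).apply_sub_sub _ _).symm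
    rw [hd, ← smul_add, sub_add_sub_cancel, sub_sub_cancel]
    ext <;> simp [intVec, div_eq_inv_mul]
  have hinv : Tendsto (fun j => (k j : ℝ)⁻¹) atTop (𝓝 0) := by
    have : Tendsto (fun j => ((|k j| : ℤ) : ℝ)⁻¹) atTop (𝓝 0) :=
      tendsto_inv_atTop_zero.comp (tendsto_intCast_atTop_iff.2 hk)
    rw [tendsto_zero_iff_norm_tendsto_zero]
    simpa using this
  have herr := hinv.zero_smul_isBoundedUnder_le
    (isBoundedUnder_of ⟨1, fun j => norm_sub_le_one_of_mem_Icc (hy j) (hFy j)⟩)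
  simpa only [hdecomp, add_zero] using hw.add herr

theorem stmt2_general (F : (ℝ × ℝ) ≃ₜ (ℝ × ℝ)) (hS : commuting F S2) (hT : commuting F T2)
    (O' : Set (ℝ × ℝ)) (hO'n : rotSet F S2 T2 ⊆ interior O') :
    ∃ k₀ : ℕ, ∀ k : ℤ, (k₀ : ℤ) ≤ |k| → disp (hzpow F k) ⊆ (k : ℝ) • O' := by
  by_contra! hbad
  have hseq : ∀ j : ℕ, ∃ k : ℤ, (j : ℤ) < |k| ∧ ∃ z, (F ^ k) z - z ∉ (k : ℝ) • O' := by
    intro j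
    obtain ⟨k, hk, hsub⟩ := hbad (j + 1)
    obtain ⟨_, ⟨z, rfl⟩, hz⟩ := not_subset.1 hsub
    exact ⟨k, by omega, z, by rwa [hzpow_eq_zpow] at hz⟩
  choose k hk z hz using hseq
  set v := fun j => (k j : ℝ)⁻¹ • ((F ^ k j) (z j) - z j)
  have hvO' : ∀ j, v j ∉ O' := fun j =>
    have hk0 : (k j : ℝ) ≠ 0 :=
      Int.cast_ne_zero.2 (abs_pos.1 ((Int.natCast_nonneg j).trans_lt (hk j)))
    (mem_smul_set_iff_inv_smul_mem₀ hk0 _ _).not.1 (hz j)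
  obtain ⟨M, hM⟩ := (commutesWithIntTranslations_zpow hS hT 1).exists_norm_apply_sub_le
  rw [zpow_one] at hM
  have hvM : ∀ j, v j ∈ Metric.closedBall 0 M := fun j => by
    simpa using norm_inv_smul_zpow_apply_sub_le F hM (k j) (z j)
  obtain ⟨w, -, φ, hφ, hw⟩ := (isCompact_closedBall 0 M).tendsto_subseq hvM
  have hwO' : w ∉ interior O' := by
    rw [← mem_compl_iff, ← closure_compl]
    exact mem_closure_of_tendsto hw (Eventually.of_forall fun i => hvO' (φ i))
  refine hwO' (hO'n (mem_rotSet_of_tendsto hS hT ?_ hw))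
  refine tendsto_atTop_mono (fun i => ?_) tendsto_natCast_atTop_atTop
  have : i ≤ φ i := hφ.le_apply
  have := hk (φ i)
  omega

/-- displacements of large iterates lie in the cone over a compact
neighbourhood of the rotation set. -/
theorem stmt2 (F : (ℝ × ℝ) ≃ₜ (ℝ × ℝ)) (hS : commuting F S2) (hT : commuting F T2)
    (O' : Set (ℝ × ℝ)) (hO'c : IsCompact O') (hO'n : rotSet F S2 T2 ⊆ interior O') :
    ∃ k₀ : ℕ, ∀ k : ℤ, (k₀ : ℤ) ≤ |k| → disp (hzpow F k) ⊆ (k : ℝ) • O' :=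
  stmt2_general F hS hT O' hO'n
end
end

section
/- Let F be a homeomorphism of ℝ² commuting with the unit translations S,T, let L ∈ SL(3,ℤ) with ρ_{S,T}(F) disjoint from Φ L⁻¹(Δ_∞), and define U,V,G from L⁻¹ as in Kwapisz's construction (U = S^{a₁}T^{b₁}F^{-c₁}, V = S^{a₂}T^{b₂}F^{-c₂}, G = S^{-a₃}T^{-b₃}F^{c₃}). Then G commutes with U and V, and G descends to a homeomorphism g of the torus ℝ²/⟨U,V⟩ ≅ 𝕋². -/
open Filter Topology Pointwise

noncomputable section

lemma commuting.symm' {X : Type*} [TopologicalSpace X] {A B : X ≃ₜ X}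
    (h : commuting A B) : commuting B A := fun x => (h x).symm

lemma commuting.inv_left {X : Type*} [TopologicalSpace X] {A B : X ≃ₜ X}
    (h : commuting A B) : commuting A.symm B := by
  intro x
  apply A.injective
  rw [A.apply_symm_apply, h, A.apply_symm_apply]

lemma commuting.hnpow_left {X : Type*} [TopologicalSpace X] {A B : X ≃ₜ X}
    (h : commuting A B) (n : ℕ) : commuting (hnpow A n) B := by
  induction n with
  | zero => intro x; rfl
  | succ n ih =>
    intro x
    simp only [hnpow, Homeomorph.trans_apply]
    rw [ih x, h]

lemma commuting.hzpow_left {X : Type*} [TopologicalSpace X] {A B : X ≃ₜ X}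
    (h : commuting A B) (n : ℤ) : commuting (hzpow A n) B := by
  cases n with
  | ofNat n => exact h.hnpow_left n
  | negSucc n => exact h.inv_left.hnpow_left (n + 1)

lemma commuting.hzpow {X : Type*} [TopologicalSpace X] {A B : X ≃ₜ X}
    (h : commuting A B) (m n : ℤ) : commuting (hzpow A m) (hzpow B n) :=
  ((h.hzpow_left m).symm'.hzpow_left n).symm'

lemma commuting.trans_left {X : Type*} [TopologicalSpace X] {A B C : X ≃ₜ X}
    (h1 : commuting A C) (h2 : commuting B C) : commuting (A.trans B) C := by
  intro x
  simp only [Homeomorph.trans_apply]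
  rw [h1, h2]

lemma commuting_S2T2 : commuting S2 T2 := by
  intro x
  simp only [S2, T2, Homeomorph.coe_addRight]
  exact add_right_comm x (0, 1) (1, 0)

lemma commuting_mk2 (F : (ℝ × ℝ) ≃ₜ (ℝ × ℝ)) (hS : commuting F S2) (hT : commuting F T2)
    (a b c a' b' c' : ℤ) : commuting (mk2 F a b c) (mk2 F a' b' c') := by
  have hFF : commuting F F := fun x => rfl
  have hTT : commuting T2 T2 := fun x => rfl
  have hSS : commuting S2 S2 := fun x => rfl
  have hTS : commuting T2 S2 := commuting_S2T2.symm'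
  unfold mk2
  have key : ∀ A : (ℝ × ℝ) ≃ₜ (ℝ × ℝ), commuting A (hzpow F (-c')) →
      commuting A (hzpow T2 b') → commuting A (hzpow S2 a') →
      commuting A (((hzpow F (-c')).trans (hzpow T2 b')).trans (hzpow S2 a')) :=
    fun A h1 h2 h3 => ((h1.symm'.trans_left h2.symm').trans_left h3.symm').symm'
  refine commuting.trans_left (commuting.trans_left ?_ ?_) ?_
  · exact key _ (hFF.hzpow _ _) (hT.hzpow _ _) (hS.hzpow _ _)
  · exact key _ (hT.symm'.hzpow _ _) (hTT.hzpow _ _) (hTS.hzpow _ _)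
  · exact key _ (hS.symm'.hzpow _ _) (commuting_S2T2.hzpow _ _) (hSS.hzpow _ _)

/-- in Kwapisz's construction, `G` commutes with `U` and `V` and descends
to a homeomorphism `g` of the torus `ℝ²/⟨U,V⟩`. -/
theorem stmt16 (F : (ℝ × ℝ) ≃ₜ (ℝ × ℝ)) (hS : commuting F S2) (hT : commuting F T2)
    (L M : Matrix (Fin 3) (Fin 3) ℤ) (hdet : L.det = 1) (hLM : L * M = 1) (hML : M * L = 1)
    (hdisj : ∀ w ∈ rotSet F S2 T2,
      (L 2 0 : ℝ) * w.1 + (L 2 1 : ℝ) * w.2 + (L 2 2 : ℝ) ≠ 0)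
    (U V G : (ℝ × ℝ) ≃ₜ (ℝ × ℝ))
    (hU : U = mk2 F (M 0 0) (M 1 0) (M 2 0)) (hV : V = mk2 F (M 0 1) (M 1 1) (M 2 1))
    (hG : G = mk2 F (-(M 0 2)) (-(M 1 2)) (-(M 2 2))) :
    commuting G U ∧ commuting G V ∧
      ∃ g : (Quot fun x y : ℝ × ℝ => ∃ m n : ℤ, (hzpow U m) ((hzpow V n) x) = y) ≃ₜ
            (Quot fun x y : ℝ × ℝ => ∃ m n : ℤ, (hzpow U m) ((hzpow V n) x) = y),
        ∀ x : ℝ × ℝ, g (Quot.mk _ x) = Quot.mk _ (G x) := by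
  have hGU : commuting G U := by
    rw [hG, hU]; exact commuting_mk2 F hS hT _ _ _ _ _ _
  have hGV : commuting G V := by
    rw [hG, hV]; exact commuting_mk2 F hS hT _ _ _ _ _ _
  refine ⟨hGU, hGV, ?_⟩
  set r := fun x y : ℝ × ℝ => ∃ m n : ℤ, (hzpow U m) ((hzpow V n) x) = y with hr
  have hmap : ∀ H : (ℝ × ℝ) ≃ₜ (ℝ × ℝ), commuting H U → commuting H V →
      ∀ x y, r x y → r (H x) (H y) := by
    rintro H h1 h2 x y ⟨m, n, rfl⟩
    exact ⟨m, n, by rw [(h2.symm'.hzpow_left n) x, (h1.symm'.hzpow_left m) _]⟩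
  have hmapG := hmap G hGU hGV
  have hmapG' := hmap G.symm hGU.inv_left hGV.inv_left
  refine ⟨{ toFun := Quot.lift (fun x => Quot.mk r (G x))
              (fun a b h => Quot.sound (hmapG a b h)),
            invFun := Quot.lift (fun x => Quot.mk r (G.symm x))
              (fun a b h => Quot.sound (hmapG' a b h)),
            left_inv := by
              intro q
              induction q using Quot.ind with
              | _ x => simp
            right_inv := by
              intro q
              induction q using Quot.ind with
              | _ x => simp
            continuous_toFun :=
              continuous_quot_lift _ (continuous_quot_mk.comp G.continuous)
            continuous_invFun :=
              continuous_quot_lift _ (continuous_quot_mk.comp G.symm.continuous) },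
    fun x => rfl⟩
end
end
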